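/- Let L_d : R^n × R^n → R be C¹ and suppose L_d is invariant under a one-parameter group of translations: L_d(q0 + s ξ, q1 + s ξ) = L_d(q0, q1) for all s ∈ R and a fixed ξ ∈ R^n. Suppose further the discrete forces do no work along ξ: ⟨f_d^+(q0,q1), ξ⟩ + ⟨f_d^-(q0,q1), ξ⟩ = 0 for all (q0,q1). Then along any solution of the forced discrete Euler-Lagrange equations, the momentum component ⟨p_k, ξ⟩ is conserved, where p_k = D_2 L_d(q_{k-1},q_k) + f_d^+(q_{k-1},q_k). -/

import Mathlib

/-!
Differentiating the invariance `L_d(q₀ + sξ, q₁ + sξ) = L_d(q₀, q₁)` at `s = 0` gives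
`⟨D₁L_d(q₀,q₁) + D₂L_d(q₀,q₁), ξ⟩ = 0`. Pairing the forced discrete Euler–Lagrange equation at
`q_{k+1}` with `ξ` and using this identity for `(q_{k+1}, q_{k+2})` together with
`⟨f_d^+ + f_d^-, ξ⟩ = 0` turns `⟨D₁L_d + f_d^-, ξ⟩` into `-⟨D₂L_d + f_d^+, ξ⟩`, which is the
conservation law.
-/

open InnerProductSpace Function

section Calculus

variable {E F : Type*} [NormedAddCommGroup E] [NormedSpace ℝ E]
  [NormedAddCommGroup F] [InnerProductSpace ℝ F] [CompleteSpace F]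

theorem fderiv_apply_eq_zero_of_forall_add_smul_eq {f : E → ℝ} {x v : E}
    (hf : DifferentiableAt ℝ f x) (hinv : ∀ s : ℝ, f (x + s • v) = f x) :
    fderiv ℝ f x v = 0 := by
  have hline : (fun s : ℝ => f (x + s • v)) = fun _ => f x := funext hinv
  rw [← hf.lineDeriv_eq_fderiv, lineDeriv, hline, deriv_const]

theorem inner_gradient_eq_fderiv_apply (f : F → ℝ) (x v : F) :
    inner ℝ (gradient f x) v = fderiv ℝ f x v := by
  rw [← toDual_gradient, toDual_apply_apply]

end Calculus

section TranslationInvariance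

variable {E : Type*} [NormedAddCommGroup E] [InnerProductSpace ℝ E] [CompleteSpace E]

theorem inner_gradient_add_inner_gradient_eq_zero_of_translation_invariant
    {L : E → E → ℝ} {x y ξ : E} (hL : DifferentiableAt ℝ (uncurry L) (x, y))
    (hinv : ∀ s : ℝ, L (x + s • ξ) (y + s • ξ) = L x y) :
    inner ℝ (gradient (fun x' => L x' y) x) ξ + inner ℝ (gradient (fun y' => L x y') y) ξ
      = 0 := by
  have hD₁ : fderiv ℝ (fun x' => L x' y) x = (fderiv ℝ (uncurry L) (x, y)).comp
      (ContinuousLinearMap.inl ℝ E E) := by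
    exact (hL.hasFDerivAt.comp x (hasFDerivAt_prodMk_left (𝕜 := ℝ) x y)).fderiv
  have hD₂ : fderiv ℝ (fun y' => L x y') y = (fderiv ℝ (uncurry L) (x, y)).comp
      (ContinuousLinearMap.inr ℝ E E) := by
    exact (hL.hasFDerivAt.comp y (hasFDerivAt_prodMk_right (𝕜 := ℝ) x y)).fderiv
  have hdiag : fderiv ℝ (uncurry L) (x, y) (ξ, ξ) = 0 :=
    fderiv_apply_eq_zero_of_forall_add_smul_eq hL hinv
  rw [inner_gradient_eq_fderiv_apply, inner_gradient_eq_fderiv_apply, hD₁, hD₂,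
    ContinuousLinearMap.comp_apply, ContinuousLinearMap.comp_apply, ← map_add]
  simpa using hdiag

end TranslationInvariance

/-- Forced discrete Noether theorem for translation symmetries: if the discrete
Lagrangian is invariant under translations by ξ and the discrete forces do no
work along ξ, then the ξ-component of the discrete momentum
p_k = D₂L_d(q_{k-1},q_k) + f_d^+(q_{k-1},q_k) is conserved along solutions of
the forced discrete Euler--Lagrange equations. -/
theorem forced_discrete_noether_translation
    (n : ℕ)
    (Ld : EuclideanSpace ℝ (Fin n) → EuclideanSpace ℝ (Fin n) → ℝ)
    (hLd : ContDiff ℝ 1 (fun x :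
      EuclideanSpace ℝ (Fin n) × EuclideanSpace ℝ (Fin n) => Ld x.1 x.2))
    (fdp fdm : EuclideanSpace ℝ (Fin n) → EuclideanSpace ℝ (Fin n) →
      EuclideanSpace ℝ (Fin n))
    (ξ : EuclideanSpace ℝ (Fin n))
    -- translation invariance of the discrete Lagrangian
    (hinv : ∀ (q₀ q₁ : EuclideanSpace ℝ (Fin n)) (s : ℝ),
      Ld (q₀ + s • ξ) (q₁ + s • ξ) = Ld q₀ q₁)
    -- the discrete forces do no work along ξ
    (hwork : ∀ q₀ q₁, (inner ℝ (fdp q₀ q₁) ξ : ℝ) + (inner ℝ (fdm q₀ q₁) ξ : ℝ) = 0)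
    (q : ℕ → EuclideanSpace ℝ (Fin n))
    -- forced discrete Euler--Lagrange equations
    (hDEL : ∀ k : ℕ,
      gradient (fun y => Ld (q k) y) (q (k + 1)) + fdp (q k) (q (k + 1)) +
      gradient (fun x => Ld x (q (k + 2))) (q (k + 1)) +
      fdm (q (k + 1)) (q (k + 2)) = 0) :
    ∀ k : ℕ,
      (inner ℝ (gradient (fun y => Ld (q (k + 1)) y) (q (k + 2)) +
        fdp (q (k + 1)) (q (k + 2))) ξ : ℝ) =
      (inner ℝ (gradient (fun y => Ld (q k) y) (q (k + 1)) +
        fdp (q k) (q (k + 1))) ξ : ℝ) := by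
  intro k
  have hdel := congrArg (fun v => inner ℝ v ξ) (hDEL k)
  simp only [inner_add_left, inner_zero_left] at hdel ⊢
  have hsymm := inner_gradient_add_inner_gradient_eq_zero_of_translation_invariant
    (hLd.differentiable one_ne_zero (q (k + 1), q (k + 2))) (hinv (q (k + 1)) (q (k + 2)))
  linarith [hwork (q (k + 1)) (q (k + 2))]
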